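/- (Backward error bound, one layer) Suppose all matrices have at most C columns, ‖σ'(Z)‖_∞ ≤ B, ‖Â‖_∞ ≤ B, ‖W‖_∞ ≤ B, ‖G_AS‖_∞ ≤ B, and ‖σ'(Z_AS) − σ'(Z)‖_∞ ≤ ρ K̇ ε, ‖G_AS − G‖_∞ ≤ ρ K' ε. Then ‖σ'(Z_AS) ⊙ (Âᵀ G_AS Wᵀ) − σ'(Z) ⊙ (Âᵀ G Wᵀ)‖_∞ ≤ ρ(K̇ + K') B³ C² ε. -/
import Mathlib


open Matrix BigOperators

noncomputable def maxNorm {m n : Type*} [Fintype m] [Fintype n] (A : Matrix m n ℝ) : ℝ :=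
  ⨆ i, ⨆ j, |A i j|

lemma maxNorm_nonneg {m n : Type*} [Fintype m] [Fintype n] (A : Matrix m n ℝ) :
    0 ≤ maxNorm A :=
  Real.iSup_nonneg fun i => Real.iSup_nonneg fun j => abs_nonneg _

lemma abs_entry_le_maxNorm {m n : Type*} [Fintype m] [Fintype n] (A : Matrix m n ℝ)
    (i : m) (j : n) : |A i j| ≤ maxNorm A := by
  have h1 : |A i j| ≤ ⨆ j, |A i j| :=
    le_ciSup (f := fun j => |A i j|) (Set.Finite.bddAbove (Set.finite_range _)) j
  exact h1.trans (le_ciSup (f := fun i => ⨆ j, |A i j|)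
    (Set.Finite.bddAbove (Set.finite_range _)) i)

lemma maxNorm_le {m n : Type*} [Fintype m] [Fintype n] {A : Matrix m n ℝ} {c : ℝ}
    (hc : 0 ≤ c) (h : ∀ i j, |A i j| ≤ c) : maxNorm A ≤ c :=
  Real.iSup_le (fun i => Real.iSup_le (h i) hc) hc

lemma maxNorm_mul {m n p : Type*} [Fintype m] [Fintype n] [Fintype p]
    (A : Matrix m n ℝ) (B : Matrix n p ℝ) :
    maxNorm (A * B) ≤ (Fintype.card n : ℝ) * maxNorm A * maxNorm B := by
  apply maxNorm_le
  · exact mul_nonneg (mul_nonneg (Nat.cast_nonneg _) (maxNorm_nonneg A)) (maxNorm_nonneg B)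
  · intro i j
    calc |(A * B) i j| = |∑ k, A i k * B k j| := by rw [Matrix.mul_apply]
      _ ≤ ∑ k, |A i k * B k j| := Finset.abs_sum_le_sum_abs _ _
      _ ≤ ∑ _k : n, maxNorm A * maxNorm B := by
          refine Finset.sum_le_sum fun k _ => ?_
          rw [abs_mul]
          exact mul_le_mul (abs_entry_le_maxNorm A i k) (abs_entry_le_maxNorm B k j)
            (abs_nonneg _) (maxNorm_nonneg A)
      _ = (Fintype.card n : ℝ) * maxNorm A * maxNorm B := by
          simp [Finset.sum_const, nsmul_eq_mul, mul_assoc]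

lemma maxNorm_hadamard {m n : Type*} [Fintype m] [Fintype n]
    (A B : Matrix m n ℝ) :
    maxNorm (Matrix.hadamard A B) ≤ maxNorm A * maxNorm B := by
  apply maxNorm_le
  · exact mul_nonneg (maxNorm_nonneg A) (maxNorm_nonneg B)
  · intro i j
    rw [Matrix.hadamard_apply, abs_mul]
    exact mul_le_mul (abs_entry_le_maxNorm A i j) (abs_entry_le_maxNorm B i j)
      (abs_nonneg _) (maxNorm_nonneg A)

lemma maxNorm_add {m n : Type*} [Fintype m] [Fintype n]
    (A B : Matrix m n ℝ) :
    maxNorm (A + B) ≤ maxNorm A + maxNorm B := by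
  apply maxNorm_le
  · exact add_nonneg (maxNorm_nonneg A) (maxNorm_nonneg B)
  · intro i j
    rw [Matrix.add_apply]
    exact (abs_add_le _ _).trans
      (add_le_add (abs_entry_le_maxNorm A i j) (abs_entry_le_maxNorm B i j))

lemma maxNorm_transpose_le {m n : Type*} [Fintype m] [Fintype n]
    (A : Matrix m n ℝ) : maxNorm Aᵀ ≤ maxNorm A :=
  maxNorm_le (maxNorm_nonneg A) fun i j => abs_entry_le_maxNorm A j i

set_option maxHeartbeats 1000000 in
theorem stmt_10 (m n p q C : ℕ) (B ρ Kdot K' ε : ℝ)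
    (hB : 0 ≤ B) (hρ : 0 ≤ ρ) (hKdot : 0 ≤ Kdot) (hK' : 0 ≤ K') (hε : 0 ≤ ε)
    (hm : m ≤ C) (hp : p ≤ C) (hq : q ≤ C)
    (Ahat : Matrix (Fin m) (Fin n) ℝ)
    (σZ σZAS : Matrix (Fin n) (Fin q) ℝ)
    (GAS G : Matrix (Fin m) (Fin p) ℝ)
    (Wmat : Matrix (Fin q) (Fin p) ℝ)
    (hσ : maxNorm σZ ≤ B) (hA : maxNorm Ahat ≤ B) (hWb : maxNorm Wmat ≤ B)
    (hGAS : maxNorm GAS ≤ B)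
    (hσd : maxNorm (σZAS - σZ) ≤ ρ * Kdot * ε)
    (hGd : maxNorm (GAS - G) ≤ ρ * K' * ε) :
    maxNorm (Matrix.hadamard σZAS (Ahatᵀ * GAS * Wmatᵀ)
      - Matrix.hadamard σZ (Ahatᵀ * G * Wmatᵀ))
      ≤ ρ * (Kdot + K') * B ^ 3 * (C : ℝ) ^ 2 * ε := by
  have hAt : maxNorm Ahatᵀ ≤ B := (maxNorm_transpose_le Ahat).trans hA
  have hWt : maxNorm Wmatᵀ ≤ B := (maxNorm_transpose_le Wmat).trans hWb
  -- decomposition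
  have key : Matrix.hadamard σZAS (Ahatᵀ * GAS * Wmatᵀ)
      - Matrix.hadamard σZ (Ahatᵀ * G * Wmatᵀ)
      = Matrix.hadamard (σZAS - σZ) (Ahatᵀ * GAS * Wmatᵀ)
        + Matrix.hadamard σZ (Ahatᵀ * (GAS - G) * Wmatᵀ) := by
    have hsub : Ahatᵀ * (GAS - G) * Wmatᵀ
        = Ahatᵀ * GAS * Wmatᵀ - Ahatᵀ * G * Wmatᵀ := by
      rw [Matrix.mul_sub, Matrix.sub_mul]
    rw [hsub]
    ext i j
    simp only [Matrix.hadamard_apply, Matrix.sub_apply, Matrix.add_apply]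
    ring
  have hmC : (m : ℝ) ≤ (C : ℝ) := Nat.cast_le.mpr hm
  have hpC : (p : ℝ) ≤ (C : ℝ) := Nat.cast_le.mpr hp
  have hm0 : (0:ℝ) ≤ (m:ℝ) := Nat.cast_nonneg m
  have hp0 : (0:ℝ) ≤ (p:ℝ) := Nat.cast_nonneg p
  -- bound on the full product Ahatᵀ * GAS * Wmatᵀ
  have hP1 : maxNorm (Ahatᵀ * GAS) ≤ (m : ℝ) * B * B := by
    refine (maxNorm_mul Ahatᵀ GAS).trans ?_
    simp only [Fintype.card_fin]
    have := mul_le_mul hAt hGAS (maxNorm_nonneg GAS) hB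
    nlinarith [maxNorm_nonneg Ahatᵀ, maxNorm_nonneg GAS]
  have hP : maxNorm (Ahatᵀ * GAS * Wmatᵀ) ≤ (m : ℝ) * (p : ℝ) * B ^ 3 := by
    refine (maxNorm_mul (Ahatᵀ * GAS) Wmatᵀ).trans ?_
    simp only [Fintype.card_fin]
    have h1 := mul_le_mul hP1 hWt (maxNorm_nonneg Wmatᵀ) (by positivity)
    nlinarith [maxNorm_nonneg (Ahatᵀ * GAS), maxNorm_nonneg Wmatᵀ]
  -- bound on Ahatᵀ * (GAS - G) * Wmatᵀ
  have hQ1 : maxNorm (Ahatᵀ * (GAS - G)) ≤ (m : ℝ) * B * (ρ * K' * ε) := by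
    refine (maxNorm_mul Ahatᵀ (GAS - G)).trans ?_
    simp only [Fintype.card_fin]
    have := mul_le_mul hAt hGd (maxNorm_nonneg (GAS - G)) hB
    nlinarith [maxNorm_nonneg Ahatᵀ, maxNorm_nonneg (GAS - G)]
  have hQ : maxNorm (Ahatᵀ * (GAS - G) * Wmatᵀ)
      ≤ (m : ℝ) * (p : ℝ) * B ^ 2 * (ρ * K' * ε) := by
    refine (maxNorm_mul (Ahatᵀ * (GAS - G)) Wmatᵀ).trans ?_
    simp only [Fintype.card_fin]
    have h1 := mul_le_mul hQ1 hWt (maxNorm_nonneg Wmatᵀ) (by positivity)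
    nlinarith [maxNorm_nonneg (Ahatᵀ * (GAS - G)), maxNorm_nonneg Wmatᵀ]
  calc maxNorm (Matrix.hadamard σZAS (Ahatᵀ * GAS * Wmatᵀ)
        - Matrix.hadamard σZ (Ahatᵀ * G * Wmatᵀ))
      ≤ maxNorm (Matrix.hadamard (σZAS - σZ) (Ahatᵀ * GAS * Wmatᵀ))
        + maxNorm (Matrix.hadamard σZ (Ahatᵀ * (GAS - G) * Wmatᵀ)) := by
        rw [key]; exact maxNorm_add _ _
    _ ≤ (ρ * Kdot * ε) * ((m : ℝ) * (p : ℝ) * B ^ 3)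
        + B * ((m : ℝ) * (p : ℝ) * B ^ 2 * (ρ * K' * ε)) := by
        refine add_le_add ((maxNorm_hadamard _ _).trans ?_)
          ((maxNorm_hadamard _ _).trans ?_)
        · exact mul_le_mul hσd hP (maxNorm_nonneg _) (by positivity)
        · exact mul_le_mul hσ hQ (maxNorm_nonneg _) hB
    _ = ρ * (Kdot + K') * B ^ 3 * ((m : ℝ) * (p : ℝ)) * ε := by ring
    _ ≤ ρ * (Kdot + K') * B ^ 3 * (C : ℝ) ^ 2 * ε := by
        have hmp : (m : ℝ) * (p : ℝ) ≤ (C : ℝ) ^ 2 := by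
          rw [sq]; exact mul_le_mul hmC hpC hp0 (le_trans hm0 hmC)
        have hcoef : 0 ≤ ρ * (Kdot + K') * B ^ 3 := by positivity
        exact mul_le_mul_of_nonneg_right (mul_le_mul_of_nonneg_left hmp hcoef) hε
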